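/- arXiv:2312.07776 — 3 statements merged into one kernel-verified Lean document; each statement's English description precedes it below -/
import Mathlib

section
/- Let B be a commutative ring, (λⱼ)_{j∈J} a finite family of elements of B, f ∈ B[[U]], and P ∈ B[T]. With the pairing ⟨∑aᵢUⁱ, ∑bᵢTⁱ⟩ = ∑aᵢbᵢ, one has ⟨ f / ∏_{j∈J}(1−λⱼU), ∏_{j∈J}(T−λⱼ) · P ⟩ = ⟨ f, T^{#J} P ⟩, where each 1−λⱼU is inverted in B[[U]] (it is a unit). -/
/-!
Multiplication by `T - a` on `B[T]` is adjoint, up to the shift `Q ↦ T * Q`, to multiplication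
by `1 - aU` on `B[[U]]`: `⟨g, (T - a) Q⟩ = ⟨g (1 - aU), T Q⟩`, both sides being
`∑ᵢ (gᵢ₊₁ - a gᵢ) qᵢ`. Moving the factors of `∏ⱼ (T - λⱼ)` across the pairing one at a time
gives the identity.
-/

/-- The pairing `B[[U]] × B[T] → B` pairing the coefficient of `Uⁱ` with the
coefficient of `Tⁱ`. -/
noncomputable def seriesPolyPairing {B : Type*} [CommRing B]
    (f : PowerSeries B) (P : Polynomial B) : B :=
  P.sum fun i b => (PowerSeries.coeff i f) * b

open Polynomial

section
variable {B : Type*} [CommRing B]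

lemma seriesPolyPairing_add_right (f : PowerSeries B) (P Q : B[X]) :
    seriesPolyPairing f (P + Q) = seriesPolyPairing f P + seriesPolyPairing f Q :=
  sum_add_index _ _ _ (fun _ => mul_zero _) fun _ => mul_add _

lemma seriesPolyPairing_monomial (f : PowerSeries B) (n : ℕ) (b : B) :
    seriesPolyPairing f (monomial n b) = PowerSeries.coeff n f * b :=
  sum_monomial_index _ _ (mul_zero _)

lemma seriesPolyPairing_X_sub_C_mul (g : PowerSeries B) (a : B) (Q : B[X]) :
    seriesPolyPairing g ((X - C a) * Q) =
      seriesPolyPairing (g * (1 - PowerSeries.C a * PowerSeries.X)) (X * Q) := by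
  induction Q using Polynomial.induction_on' with
  | add P Q hP hQ => simp only [mul_add, seriesPolyPairing_add_right, hP, hQ]
  | monomial n b =>
    rw [sub_mul, X_mul_monomial, C_mul_monomial, sub_eq_add_neg, ← monomial_neg,
      seriesPolyPairing_add_right, mul_sub, mul_one, ← mul_assoc]
    simp only [seriesPolyPairing_monomial, map_sub, PowerSeries.coeff_succ_mul_X,
      PowerSeries.coeff_mul_C]
    ring

lemma seriesPolyPairing_prod_X_sub_C_mul {ι : Type*} (J : Finset ι) (lam : ι → B)
    (g : PowerSeries B) (P : B[X]) :
    seriesPolyPairing g ((∏ j ∈ J, (X - C (lam j))) * P) =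
      seriesPolyPairing (g * ∏ j ∈ J, (1 - PowerSeries.C (lam j) * PowerSeries.X))
        (X ^ J.card * P) := by
  classical
  induction J using Finset.induction_on generalizing g P with
  | empty => simp
  | insert a s ha ih =>
    rw [Finset.prod_insert ha, Finset.prod_insert ha, Finset.card_insert_of_notMem ha, mul_assoc,
      seriesPolyPairing_X_sub_C_mul, mul_left_comm, ih, ← mul_assoc, pow_succ, mul_assoc]
end

/-- For a finite family `(λⱼ)_{j ∈ J}` of elements of `B`, if `g` is the quotient of `f`
by the unit `∏_{j∈J} (1 − λⱼ U)` of `B[[U]]` (i.e. `g * ∏_{j∈J} (1 − λⱼU) = f`), then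
`⟨g, ∏_{j∈J}(T−λⱼ) ⋅ P⟩ = ⟨f, T^{#J} P⟩`. -/
theorem stmt_3 {B : Type*} [CommRing B] {ι : Type*} (J : Finset ι) (lam : ι → B)
    (f g : PowerSeries B) (P : Polynomial B)
    (hg : g * ∏ j ∈ J, (1 - PowerSeries.C (lam j) * PowerSeries.X) = f) :
    seriesPolyPairing g ((∏ j ∈ J, (Polynomial.X - Polynomial.C (lam j))) * P) =
      seriesPolyPairing f (Polynomial.X ^ J.card * P) := by
  rw [seriesPolyPairing_prod_X_sub_C_mul, hg]
end

section
/- Let λ = (λ₁,…,λ_l) be a partition of n and μ = (μ₁,…,μ_m) a composition of n. Define m_{λ,μ} as the number of subsets Z ⊆ {1,…,l}×{1,…,m} such that each row i contains exactly λᵢ elements of Z and each column j contains exactly μⱼ elements of Z. Let I₁,…,I_m be disjoint sets with #Iⱼ = μⱼ, Aⱼ the partition of Iⱼ into singletons, and let P̃_λ be the set of l-tuples (C₁,…,C_l) of pairwise disjoint subsets of I₁⊔…⊔I_m such that {C₁,…,C_l} ∈ J(A₁,…,A_m) and #Cᵢ = λᵢ for all i. Then #P̃_λ = (∏_{j=1}^m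 μⱼ!) · m_{λ,μ}. -/
/-!
Record a tuple `C` by its incidence set `Z = {(i, j) | C i meets I j}` together with, for every
column `j`, the bijection from `I j` onto the `j`-th column of `Z` sending a point to the index of
the block containing it. Conversely, any `Z` with such a family of bijections rebuilds exactly one
tuple, so the tuples correspond to pairs (`Z`, family). Row `i` of `Z` has `#C i` elements and
column `j` has `#I j = μ j`, hence each `Z` counted by `m_{λ,μ}` carries `∏ μ j!` tuples.
-/

open Finset

/-- `m_{λ,μ}`: the number of subsets `Z ⊆ {1,…,l} × {1,…,m}` whose row `i` has exactly
`λ i` elements and whose column `j` has exactly `μ j` elements. -/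
noncomputable def mCount (l m : ℕ) (lam : Fin l → ℕ) (mu : Fin m → ℕ) : ℕ :=
  Nat.card {Z : Finset (Fin l × Fin m) //
    (∀ i, (Z.filter fun z => z.1 = i).card = lam i) ∧
    (∀ j, (Z.filter fun z => z.2 = j).card = mu j)}

open Function Nat

section

variable {α ι κ : Type*}

section InterNonempty

variable [DecidableEq α] [Fintype ι] {B : ι → Finset α} {s : Finset α}

noncomputable def indexOfMem (hs : s ⊆ univ.biUnion B) (x : s) : ι :=
  (mem_biUnion.mp (hs x.2)).choose

lemma mem_indexOfMem (hs : s ⊆ univ.biUnion B) (x : s) : ↑x ∈ B (indexOfMem hs x) :=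
  (mem_biUnion.mp (hs x.2)).choose_spec.2

lemma indexOfMem_eq_iff (hB : Pairwise (Disjoint on B)) (hs : s ⊆ univ.biUnion B) {x : s}
    {i : ι} : indexOfMem hs x = i ↔ ↑x ∈ B i :=
  ⟨(· ▸ mem_indexOfMem hs x),
    fun hi => hB.eq (not_disjoint_iff.2 ⟨x, mem_indexOfMem hs x, hi⟩)⟩

noncomputable def equivInterNonempty (hB : Pairwise (Disjoint on B)) (hs : s ⊆ univ.biUnion B)
    (h1 : ∀ i, #(s ∩ B i) ≤ 1) : s ≃ {i // (s ∩ B i).Nonempty} :=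
  Equiv.ofBijective (fun x => ⟨indexOfMem hs x, x, mem_inter.2 ⟨x.2, mem_indexOfMem hs x⟩⟩) <| by
    refine ⟨fun x y hxy => Subtype.ext ?_, fun ⟨i, x, hx⟩ => ?_⟩
    · have hxy : indexOfMem hs x = indexOfMem hs y := congrArg Subtype.val hxy
      have hy := mem_indexOfMem hs y
      rw [← hxy] at hy
      exact card_le_one.1 (h1 _) _ (mem_inter.2 ⟨x.2, mem_indexOfMem hs x⟩) _ (mem_inter.2 ⟨y.2, hy⟩)
    · obtain ⟨hxs, hxi⟩ := mem_inter.1 hx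
      exact ⟨⟨x, hxs⟩, Subtype.ext ((indexOfMem_eq_iff hB hs).2 hxi)⟩

lemma equivInterNonempty_apply_eq_iff (hB : Pairwise (Disjoint on B)) (hs : s ⊆ univ.biUnion B)
    (h1 : ∀ i, #(s ∩ B i) ≤ 1) {x : s} {i : ι} :
    (equivInterNonempty hB hs h1 x : ι) = i ↔ ↑x ∈ B i :=
  indexOfMem_eq_iff hB hs

end InterNonempty

lemma card_filter_fst_eq_natCard [DecidableEq ι] [Fintype κ] (Z : Finset (ι × κ)) (i : ι) :
    #(Z.filter (·.1 = i)) = Nat.card {j // (i, j) ∈ Z} := by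
  classical
  rw [Nat.card_eq_fintype_card, Fintype.card_subtype]
  refine card_nbij' Prod.snd (Prod.mk i) ?_ ?_ ?_ ?_ <;> intro x hx <;> aesop

lemma card_filter_snd_eq_natCard [Fintype ι] [DecidableEq κ] (Z : Finset (ι × κ)) (j : κ) :
    #(Z.filter (·.2 = j)) = Nat.card {i // (i, j) ∈ Z} := by
  classical
  rw [Nat.card_eq_fintype_card, Fintype.card_subtype]
  refine card_nbij' Prod.fst (·, j) ?_ ?_ ?_ ?_ <;> intro x hx <;> aesop

section ColumnEquivs

abbrev ColumnEquivs (I : κ → Finset α) (Z : Finset (ι × κ)) : Type _ :=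
  ∀ j, I j ≃ {i // (i, j) ∈ Z}

variable {I : κ → Finset α}

lemma sigma_columnEquivs_ext {Z Z' : Finset (ι × κ)} (h : Z = Z') {e : ColumnEquivs I Z}
    {e' : ColumnEquivs I Z'} (he : ∀ j x, (e j x : ι) = e' j x) :
    (⟨Z, e⟩ : Σ Z, ColumnEquivs I Z) = ⟨Z', e'⟩ := by
  subst h
  exact congrArg _ (funext fun j => Equiv.ext fun x => Subtype.ext (he j x))

variable [DecidableEq α] [Fintype κ] [DecidableEq ι] {Z : Finset (ι × κ)}

def ofColumnEquivs (e : ColumnEquivs I Z) (i : ι) : Finset α :=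
  univ.biUnion fun j => ((I j).attach.filter fun x => (e j x : ι) = i).map (Embedding.subtype _)

lemma mem_ofColumnEquivs {e : ColumnEquivs I Z} {i : ι} {x : α} :
    x ∈ ofColumnEquivs e i ↔ ∃ j, ∃ hx : x ∈ I j, (e j ⟨x, hx⟩ : ι) = i := by
  simp [ofColumnEquivs]

end ColumnEquivs

section Transversal

variable [DecidableEq α] [Fintype ι] [Fintype κ]

/-- `{C i}` belongs to `J(A₁,…,A_m)` for the partitions `Aⱼ` of `Iⱼ` into singletons (empty
blocks allowed). -/
structure IsTransversal (I : κ → Finset α) (C : ι → Finset α) : Prop where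
  pairwise_disjoint : Pairwise (Disjoint on C)
  biUnion_eq : univ.biUnion C = univ.biUnion I
  card_inter_le_one : ∀ i j, #(C i ∩ I j) ≤ 1

def incidence (I : κ → Finset α) (C : ι → Finset α) : Finset (ι × κ) :=
  univ.filter fun p => (C p.1 ∩ I p.2).Nonempty

variable {I : κ → Finset α} {C : ι → Finset α}

@[simp]
lemma mem_incidence {i : ι} {j : κ} : (i, j) ∈ incidence I C ↔ (C i ∩ I j).Nonempty := by
  simp [incidence]

namespace IsTransversal

lemma subset_biUnion_left (hC : IsTransversal I C) (i : ι) : C i ⊆ univ.biUnion I :=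
  hC.biUnion_eq ▸ subset_biUnion_of_mem C (mem_univ i)

lemma subset_biUnion_right (hC : IsTransversal I C) (j : κ) : I j ⊆ univ.biUnion C :=
  hC.biUnion_eq ▸ subset_biUnion_of_mem I (mem_univ j)

lemma card_inter_le_one' (hC : IsTransversal I C) (j : κ) (i : ι) : #(I j ∩ C i) ≤ 1 :=
  inter_comm (I j) (C i) ▸ hC.card_inter_le_one i j

noncomputable def rowEquiv (hI : Pairwise (Disjoint on I)) (hC : IsTransversal I C) (i : ι) :
    C i ≃ {j // (i, j) ∈ incidence I C} :=
  (equivInterNonempty hI (hC.subset_biUnion_left i) (hC.card_inter_le_one i)).trans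
    (Equiv.subtypeEquivRight fun _ => mem_incidence.symm)

noncomputable def columnEquiv (hC : IsTransversal I C) (j : κ) :
    I j ≃ {i // (i, j) ∈ incidence I C} :=
  (equivInterNonempty hC.pairwise_disjoint (hC.subset_biUnion_right j)
    (hC.card_inter_le_one' j)).trans
      (Equiv.subtypeEquivRight fun i => by rw [mem_incidence, inter_comm])

lemma columnEquiv_apply_eq_iff (hC : IsTransversal I C) {j : κ} {x : I j} {i : ι} :
    (hC.columnEquiv j x : ι) = i ↔ ↑x ∈ C i :=
  equivInterNonempty_apply_eq_iff hC.pairwise_disjoint (hC.subset_biUnion_right j)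
    (hC.card_inter_le_one' j)

end IsTransversal

lemma IsTransversal.card_filter_snd_incidence [DecidableEq κ] (hC : IsTransversal I C) (j : κ) :
    #((incidence I C).filter (·.2 = j)) = #(I j) := by
  rw [card_filter_snd_eq_natCard, ← Nat.card_eq_finsetCard]
  exact Nat.card_congr (hC.columnEquiv j).symm

lemma card_columnEquivs [DecidableEq κ] {Z : Finset (ι × κ)}
    (hZ : ∀ j, #(Z.filter (·.2 = j)) = #(I j)) : Nat.card (ColumnEquivs I Z) = ∏ j, (#(I j))! := by
  classical
  rw [Nat.card_pi]
  refine prod_congr rfl fun j _ => ?_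
  have hcard : Fintype.card (I j) = Fintype.card {i // (i, j) ∈ Z} := by
    rw [← Nat.card_eq_fintype_card, ← Nat.card_eq_fintype_card, Nat.card_eq_finsetCard,
      ← card_filter_snd_eq_natCard, hZ]
  rw [Nat.card_eq_fintype_card, Fintype.card_equiv (Fintype.equivOfCardEq hcard),
    Fintype.card_coe]

variable [DecidableEq ι] {Z : Finset (ι × κ)}

lemma IsTransversal.card_filter_fst_incidence (hI : Pairwise (Disjoint on I))
    (hC : IsTransversal I C) (i : ι) : #((incidence I C).filter (·.1 = i)) = #(C i) := by
  rw [card_filter_fst_eq_natCard, ← Nat.card_eq_finsetCard]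
  exact Nat.card_congr (hC.rowEquiv hI i).symm

lemma isTransversal_ofColumnEquivs (hI : Pairwise (Disjoint on I))
    (e : ColumnEquivs I Z) : IsTransversal I (ofColumnEquivs e) where
  pairwise_disjoint i i' hne := by
    refine disjoint_left.2 fun x hx hx' => hne ?_
    obtain ⟨j, hxj, rfl⟩ := mem_ofColumnEquivs.1 hx
    obtain ⟨j', hxj', rfl⟩ := mem_ofColumnEquivs.1 hx'
    obtain rfl : j = j' := hI.eq (not_disjoint_iff.2 ⟨x, hxj, hxj'⟩)
    rfl
  biUnion_eq := by
    ext x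
    simp only [mem_biUnion, mem_univ, true_and, mem_ofColumnEquivs]
    exact ⟨fun ⟨_, j, hxj, _⟩ => ⟨j, hxj⟩, fun ⟨j, hxj⟩ => ⟨_, j, hxj, rfl⟩⟩
  card_inter_le_one i j := by
    refine card_le_one.2 fun x hx y hy => ?_
    obtain ⟨hx, hxj⟩ := mem_inter.1 hx
    obtain ⟨hy, hyj⟩ := mem_inter.1 hy
    obtain ⟨j₁, hxj₁, rfl⟩ := mem_ofColumnEquivs.1 hx
    obtain ⟨j₂, hyj₂, hxy⟩ := mem_ofColumnEquivs.1 hy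
    obtain rfl : j = j₁ := hI.eq (not_disjoint_iff.2 ⟨x, hxj, hxj₁⟩)
    obtain rfl : j = j₂ := hI.eq (not_disjoint_iff.2 ⟨y, hyj, hyj₂⟩)
    exact congrArg Subtype.val ((e j).injective (Subtype.ext hxy)).symm

lemma incidence_ofColumnEquivs (hI : Pairwise (Disjoint on I))
    (e : ColumnEquivs I Z) : incidence I (ofColumnEquivs e) = Z := by
  ext ⟨i, j⟩
  rw [mem_incidence]
  constructor
  · rintro ⟨x, hx⟩
    obtain ⟨hx, hxj⟩ := mem_inter.1 hx
    obtain ⟨j', hxj', rfl⟩ := mem_ofColumnEquivs.1 hx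
    obtain rfl : j' = j := hI.eq (not_disjoint_iff.2 ⟨x, hxj', hxj⟩)
    exact (e j' _).2
  · intro h
    set x := (e j).symm ⟨i, h⟩
    refine ⟨x, mem_inter.2 ⟨mem_ofColumnEquivs.2 ⟨j, x.2, ?_⟩, x.2⟩⟩
    simp [x]

noncomputable def transversalEquiv (hI : Pairwise (Disjoint on I)) :
    {C : ι → Finset α // IsTransversal I C} ≃ Σ Z : Finset (ι × κ), ColumnEquivs I Z where
  toFun C := ⟨incidence I C, C.2.columnEquiv⟩
  invFun e := ⟨ofColumnEquivs e.2, isTransversal_ofColumnEquivs hI e.2⟩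
  left_inv C := by
    refine Subtype.ext (funext fun i => Finset.ext fun x => ?_)
    simp only [mem_ofColumnEquivs, C.2.columnEquiv_apply_eq_iff]
    refine ⟨fun ⟨_, _, hx⟩ => hx, fun hx => ?_⟩
    obtain ⟨j, -, hxj⟩ := mem_biUnion.1 (C.2.subset_biUnion_left i hx)
    exact ⟨j, hxj, hx⟩
  right_inv := fun ⟨_, e⟩ =>
    sigma_columnEquivs_ext (incidence_ofColumnEquivs hI e) fun j x =>
      (IsTransversal.columnEquiv_apply_eq_iff _).2 (mem_ofColumnEquivs.2 ⟨j, x.2, rfl⟩)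

theorem card_transversal_eq_prod_factorial_mul [DecidableEq κ]
    (hI : Pairwise (Disjoint on I)) (r : ι → ℕ) :
    Nat.card {C : ι → Finset α // IsTransversal I C ∧ ∀ i, #(C i) = r i} =
      (∏ j, (#(I j))!) * Nat.card {Z : Finset (ι × κ) //
        (∀ i, #(Z.filter (·.1 = i)) = r i) ∧ ∀ j, #(Z.filter (·.2 = j)) = #(I j)} := by
  classical
  have e : {C // IsTransversal I C ∧ ∀ i, #(C i) = r i} ≃ Σ Z : {Z : Finset (ι × κ) //
      (∀ i, #(Z.filter (·.1 = i)) = r i) ∧ ∀ j, #(Z.filter (·.2 = j)) = #(I j)},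
        ColumnEquivs I Z.1 :=
    (Equiv.subtypeSubtypeEquivSubtypeInter _ fun C => ∀ i, #(C i) = r i).symm.trans <|
      ((transversalEquiv hI).subtypeEquiv fun C => by
        simp [transversalEquiv, C.2.card_filter_fst_incidence hI,
          C.2.card_filter_snd_incidence]).trans (Equiv.subtypeSigmaEquiv _ _)
  rw [Nat.card_congr e, Nat.card_sigma, sum_congr rfl fun Z _ => card_columnEquivs Z.2.2,
    sum_const, Finset.card_univ, smul_eq_mul, mul_comm, ← Nat.card_eq_fintype_card]

end Transversal

end

theorem stmt_7_general {α : Type*} [DecidableEq α] (l m : ℕ)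
    (lam : Fin l → ℕ) (mu : Fin m → ℕ)
    (I : Fin m → Finset α) (hIcard : ∀ j, (I j).card = mu j)
    (hIdisj : ∀ j j', j ≠ j' → Disjoint (I j) (I j')) :
    Nat.card {C : Fin l → Finset α //
        (∀ i i', i ≠ i' → Disjoint (C i) (C i')) ∧
        (Finset.univ.biUnion C = Finset.univ.biUnion I) ∧
        (∀ i j, ((C i) ∩ (I j)).card ≤ 1) ∧
        (∀ i, (C i).card = lam i)} =
      (∏ j, (mu j).factorial) * mCount l m lam mu := by
  have hcount := card_transversal_eq_prod_factorial_mul (fun j j' h => hIdisj j j' h) lam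
  simp only [hIcard] at hcount
  rw [mCount, ← hcount]
  refine Nat.card_congr (Equiv.subtypeEquivRight fun C => ?_)
  exact ⟨fun ⟨hd, hc, h1, hr⟩ => ⟨⟨fun i i' => hd i i', hc, h1⟩, hr⟩,
    fun ⟨⟨hd, hc, h1⟩, hr⟩ => ⟨fun i i' => @hd i i', hc, h1, hr⟩⟩

/-- Let `λ` be a partition of `n`, `μ = (μ₁,…,μ_m)` a composition of `n`,
`I₁,…,I_m` disjoint sets with `#Iⱼ = μⱼ` and `Aⱼ` the partition of `Iⱼ` into singletons.
Then the number of `l`-tuples `(C₁,…,C_l)` of pairwise disjoint subsets of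
`I₁ ⊔ … ⊔ I_m` with `{C₁,…,C_l} ∈ J(A₁,…,A_m)` (i.e. the `Cᵢ` cover `I₁ ⊔ … ⊔ I_m` and
each `Cᵢ` meets each `Iⱼ` in at most one point) and `#Cᵢ = λᵢ` equals
`(∏ⱼ μⱼ!) ⋅ m_{λ,μ}`. -/
theorem stmt_7 {α : Type*} [DecidableEq α] (n l m : ℕ)
    (lam : Fin l → ℕ) (hlam_pos : ∀ i, 0 < lam i) (hlam_anti : Antitone lam)
    (hlam_sum : ∑ i, lam i = n)
    (mu : Fin m → ℕ) (hmu_pos : ∀ j, 0 < mu j) (hmu_sum : ∑ j, mu j = n)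
    (I : Fin m → Finset α) (hIcard : ∀ j, (I j).card = mu j)
    (hIdisj : ∀ j j', j ≠ j' → Disjoint (I j) (I j')) :
    Nat.card {C : Fin l → Finset α //
        (∀ i i', i ≠ i' → Disjoint (C i) (C i')) ∧
        (Finset.univ.biUnion C = Finset.univ.biUnion I) ∧
        (∀ i j, ((C i) ∩ (I j)).card ≤ 1) ∧
        (∀ i, (C i).card = lam i)} =
      (∏ j, (mu j).factorial) * mCount l m lam mu :=
  stmt_7_general l m lam mu I hIcard hIdisj
end

section
/- Order the partitions of an integer n by the reverse lexicographic order. Then the matrix (m_{λᵀ, μ})_{λ,μ}, where λ and μ range over the partitions of n and λᵀ denotes the conjugate partition, is upper triangular with 1's on the diagonal; in particular this matrix is invertible over ℤ. -/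
/-!
A 0-1 matrix whose `i`-th row has `λᵀᵢ = #{j | λⱼ > i}` entries meets the first `k` columns of
row `i` in at most `min λᵀᵢ k` cells, and `∑ᵢ min λᵀᵢ k = λ₀ + ⋯ + λₖ₋₁` (count the cells of the
first `k` columns of the Young diagram of `λ` row by row). Hence its column sums `μ` satisfy
`μ₀ + ⋯ + μₖ₋₁ ≤ λ₀ + ⋯ + λₖ₋₁` for every `k`, which forces `μ = λ` or `μ <lex λ`. When `μ = λ`
all these bounds are equalities, so row `i` is filled exactly in its first `λᵀᵢ` columns: the
diagram of `λᵀ` is the only such matrix. The matrix `(m_{λᵀ,μ})` is therefore triangular with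
unit diagonal for the lexicographic order.
-/

open Finset

/-- `m_{a,b}` for two lists of row/column sums: the number of 0-1 matrices (coded as
finite subsets `Z` of `ℕ × ℕ`) whose `i`-th row has exactly `a_i` elements and whose
`j`-th column has exactly `b_j` elements (rows and columns beyond the lengths of the
lists being empty). -/
noncomputable def mList (a b : List ℕ) : ℕ :=
  Nat.card {Z : Finset (ℕ × ℕ) //
    (∀ i, (Z.filter fun z => z.1 = i).card = a.getD i 0) ∧
    (∀ j, (Z.filter fun z => z.2 = j).card = b.getD j 0)}

/-- The conjugate partition: `(λᵀ)ᵢ = #{j : λⱼ ≥ i}` (transpose of the Young diagram). -/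
def conjList (a : List ℕ) : List ℕ :=
  (List.range (a.getD 0 0)).map fun i => (a.filter fun x => i + 1 ≤ x).length

/-- The parts of a partition of `n`, listed in (weakly) decreasing order. -/
def sortedParts {n : ℕ} (p : n.Partition) : List ℕ := (p.parts.sort (· ≤ ·)).reverse


def numPartsGt (a : List ℕ) (i : ℕ) : ℕ := (a.filter fun x => i + 1 ≤ x).length

lemma getD_le_of_forall_le {a : List ℕ} {N : ℕ} (h : ∀ x ∈ a, x ≤ N) (j : ℕ) :
    a.getD j 0 ≤ N := by
  rcases lt_or_ge j a.length with hj | hj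
  · rw [List.getD_eq_getElem _ _ hj]; exact h _ (List.getElem_mem hj)
  · rw [List.getD_eq_default _ _ hj]; exact Nat.zero_le _

lemma numPartsGt_eq_zero {a : List ℕ} {N i : ℕ} (hN : ∀ x ∈ a, x ≤ N) (hi : N ≤ i) :
    numPartsGt a i = 0 := by
  rw [numPartsGt, List.length_eq_zero_iff, List.filter_eq_nil_iff]
  intro x hx
  have := hN x hx
  simp only [decide_eq_true_eq]
  omega

lemma conjList_getD {a : List ℕ} (ha : a.Pairwise (· ≥ ·)) (i : ℕ) :
    (conjList a).getD i 0 = numPartsGt a i := by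
  rcases lt_or_ge i (a.getD 0 0) with hi | hi
  · rw [conjList, List.getD_eq_getElem _ _ (by simpa using hi)]
    simp [numPartsGt]
  · rw [conjList, List.getD_eq_default _ _ (by simpa using hi)]
    refine (numPartsGt_eq_zero (fun x hx => ?_) hi).symm
    cases a with
    | nil => simp at hx
    | cons y t =>
      rcases List.mem_cons.1 hx with rfl | hx
      · simp
      · exact (List.pairwise_cons.1 ha).1 x hx

lemma lt_numPartsGt_iff {a : List ℕ} (ha : a.Pairwise (· ≥ ·)) (i j : ℕ) :
    j < numPartsGt a i ↔ i < a.getD j 0 := by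
  induction a generalizing j with
  | nil => simp [numPartsGt]
  | cons x t ih =>
    obtain ⟨hxt, hts⟩ := List.pairwise_cons.1 ha
    by_cases hx : i < x
    · have hr : numPartsGt (x :: t) i = numPartsGt t i + 1 := by
        simp [numPartsGt, hx]
      cases j with
      | zero => simp [hr, hx]
      | succ j => simp only [hr, List.getD_cons_succ, ← ih hts]; omega
    · have hr : numPartsGt (x :: t) i = 0 :=
        numPartsGt_eq_zero (N := x) (by simpa using hxt) (by omega)
      cases j with
      | zero => simp [hr, hx]
      | succ j =>
        have := getD_le_of_forall_le hxt j
        simp only [hr, List.getD_cons_succ]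
        omega

lemma card_filter_lt_range (m k : ℕ) : #{j ∈ range k | j < m} = min m k := by
  rw [show {j ∈ range k | j < m} = range (min m k) by ext j; simp; omega, card_range]

lemma sum_min_numPartsGt {a : List ℕ} (ha : a.Pairwise (· ≥ ·)) {N : ℕ} (hN : ∀ x ∈ a, x ≤ N)
    (k : ℕ) : ∑ i ∈ range N, min (numPartsGt a i) k = ∑ j ∈ range k, a.getD j 0 := by
  have hrow (i : ℕ) :
      min (numPartsGt a i) k = ∑ j ∈ range k, if j < numPartsGt a i then 1 else 0 := by
    rw [← card_filter_lt_range, card_filter]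
  have hcol (j : ℕ) : a.getD j 0 = ∑ i ∈ range N, if j < numPartsGt a i then 1 else 0 := by
    simp_rw [lt_numPartsGt_iff ha]
    rw [← card_filter, card_filter_lt_range, min_eq_left (getD_le_of_forall_le hN j)]
  simp_rw [hrow, hcol]
  exact sum_comm

section CellSets

def rowPrefixCard (Z : Finset (ℕ × ℕ)) (i k : ℕ) : ℕ := #{z ∈ Z | z.1 = i ∧ z.2 < k}

variable {Z : Finset (ℕ × ℕ)} {r c : ℕ → ℕ} {N : ℕ}

lemma fst_lt_of_mem (hr : ∀ i, #{z ∈ Z | z.1 = i} = r i) (hN : ∀ i, N ≤ i → r i = 0)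
    {z : ℕ × ℕ} (hz : z ∈ Z) : z.1 < N := by
  by_contra h
  have hrow : 0 < #{w ∈ Z | w.1 = z.1} := card_pos.2 ⟨z, mem_filter.2 ⟨hz, rfl⟩⟩
  exact hrow.ne' ((hr z.1).trans (hN _ (by omega)))

lemma rowPrefixCard_le_min (hr : ∀ i, #{z ∈ Z | z.1 = i} = r i) (i k : ℕ) :
    rowPrefixCard Z i k ≤ min (r i) k := by
  refine le_min ((card_le_card fun z hz => ?_).trans_eq (hr i)) ?_
  · simp only [mem_filter] at hz ⊢; exact ⟨hz.1, hz.2.1⟩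
  · refine (card_le_card_of_injOn Prod.snd (t := range k) ?_ ?_).trans_eq (card_range k)
    · exact fun z hz => mem_range.2 (mem_filter.1 hz).2.2
    · exact fun z hz w hw h =>
        Prod.ext ((mem_filter.1 hz).2.1.trans (mem_filter.1 hw).2.1.symm) h

/-- Both sides count the cells of `Z` in the first `k` columns. -/
lemma sum_rowPrefixCard (hr : ∀ i, #{z ∈ Z | z.1 = i} = r i) (hN : ∀ i, N ≤ i → r i = 0)
    (hc : ∀ j, #{z ∈ Z | z.2 = j} = c j) (k : ℕ) :
    ∑ i ∈ range N, rowPrefixCard Z i k = ∑ j ∈ range k, c j := by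
  have hrows : #{z ∈ Z | z.2 < k} = ∑ i ∈ range N, rowPrefixCard Z i k := by
    rw [card_eq_sum_card_fiberwise (f := Prod.fst) (t := range N)
      fun z hz => mem_range.2 (fst_lt_of_mem hr hN (mem_filter.1 hz).1)]
    refine sum_congr rfl fun i _ => ?_
    rw [rowPrefixCard, filter_filter]
    exact congrArg _ (filter_congr fun z _ => by tauto)
  have hcols : #{z ∈ Z | z.2 < k} = ∑ j ∈ range k, c j := by
    rw [card_eq_sum_card_fiberwise (f := Prod.snd) (t := range k)
      fun z hz => mem_range.2 (mem_filter.1 hz).2]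
    refine sum_congr rfl fun j hj => ?_
    rw [filter_filter, ← hc j]
    exact congrArg _ (filter_congr fun z _ => by grind)
  rw [← hrows, hcols]

lemma rowPrefixCard_succ (Z : Finset (ℕ × ℕ)) (i j : ℕ) :
    rowPrefixCard Z i (j + 1) = rowPrefixCard Z i j + if (i, j) ∈ Z then 1 else 0 := by
  have hsplit : {z ∈ Z | z.1 = i ∧ z.2 < j + 1} =
      {z ∈ Z | z.1 = i ∧ z.2 < j} ∪ {z ∈ Z | z = (i, j)} := by
    rw [← filter_or]
    refine filter_congr fun z _ => ?_
    obtain ⟨x, y⟩ := z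
    simp only [Prod.mk.injEq]
    omega
  rw [rowPrefixCard, hsplit, card_union_of_disjoint, filter_eq']
  · split_ifs <;> simp [rowPrefixCard]
  · refine disjoint_filter.2 fun z _ h hz => ?_
    subst hz
    omega

end CellSets

section ConjugateRows

variable {a : List ℕ} {Z : Finset (ℕ × ℕ)}

lemma sum_range_le_of_rows_eq_numPartsGt (ha : a.Pairwise (· ≥ ·)) {c : ℕ → ℕ}
    (hr : ∀ i, #{z ∈ Z | z.1 = i} = numPartsGt a i) (hc : ∀ j, #{z ∈ Z | z.2 = j} = c j)
    (k : ℕ) : ∑ j ∈ range k, c j ≤ ∑ j ∈ range k, a.getD j 0 := by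
  have hbound : ∀ x ∈ a, x ≤ a.sum := fun x hx => List.le_sum_of_mem hx
  calc ∑ j ∈ range k, c j
      = ∑ i ∈ range a.sum, rowPrefixCard Z i k :=
        (sum_rowPrefixCard hr (fun i => numPartsGt_eq_zero hbound) hc k).symm
    _ ≤ ∑ i ∈ range a.sum, min (numPartsGt a i) k :=
        sum_le_sum fun i _ => rowPrefixCard_le_min hr i k
    _ = ∑ j ∈ range k, a.getD j 0 := sum_min_numPartsGt ha hbound k

lemma rowPrefixCard_eq_min (ha : a.Pairwise (· ≥ ·))
    (hr : ∀ i, #{z ∈ Z | z.1 = i} = numPartsGt a i) (hc : ∀ j, #{z ∈ Z | z.2 = j} = a.getD j 0)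
    (i k : ℕ) : rowPrefixCard Z i k = min (numPartsGt a i) k := by
  have hbound : ∀ x ∈ a, x ≤ a.sum + i + 1 := fun x hx => by
    have := List.le_sum_of_mem hx; omega
  have hsum : ∑ i ∈ range (a.sum + i + 1), rowPrefixCard Z i k =
      ∑ i ∈ range (a.sum + i + 1), min (numPartsGt a i) k := by
    rw [sum_rowPrefixCard hr (fun i => numPartsGt_eq_zero hbound) hc,
      sum_min_numPartsGt ha hbound]
  exact (sum_eq_sum_iff_of_le fun i _ => rowPrefixCard_le_min hr i k).1 hsum i
    (mem_range.2 (by omega))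

def conjDiagram (a : List ℕ) : Finset (ℕ × ℕ) :=
  {z ∈ range a.sum ×ˢ range a.length | z.2 < numPartsGt a z.1}

lemma mem_conjDiagram {z : ℕ × ℕ} : z ∈ conjDiagram a ↔ z.2 < numPartsGt a z.1 := by
  refine ⟨fun h => (mem_filter.1 h).2, fun h => mem_filter.2 ⟨mem_product.2 ⟨?_, ?_⟩, h⟩⟩
  · by_contra hz
    have hzero := numPartsGt_eq_zero (fun x hx => List.le_sum_of_mem hx)
      (not_lt.1 (mt mem_range.2 hz))
    omega
  · exact mem_range.2 (h.trans_le (List.length_filter_le _ _))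

lemma eq_conjDiagram (ha : a.Pairwise (· ≥ ·))
    (hr : ∀ i, #{z ∈ Z | z.1 = i} = numPartsGt a i) (hc : ∀ j, #{z ∈ Z | z.2 = j} = a.getD j 0) :
    Z = conjDiagram a := by
  ext ⟨i, j⟩
  have hstep := rowPrefixCard_eq_min ha hr hc i (j + 1)
  rw [rowPrefixCard_succ, rowPrefixCard_eq_min ha hr hc i j] at hstep
  rw [mem_conjDiagram]
  split_ifs at hstep with hz <;> simp only [hz, true_iff, false_iff] <;> omega

lemma card_filter_fst_conjDiagram (i : ℕ) : #{z ∈ conjDiagram a | z.1 = i} = numPartsGt a i := by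
  rw [show {z ∈ conjDiagram a | z.1 = i} = {i} ×ˢ range (numPartsGt a i) by
    ext ⟨x, y⟩
    simp only [mem_filter, mem_conjDiagram, mem_product, mem_singleton, mem_range]
    grind]
  simp

lemma card_filter_snd_conjDiagram (ha : a.Pairwise (· ≥ ·)) (j : ℕ) :
    #{z ∈ conjDiagram a | z.2 = j} = a.getD j 0 := by
  rw [show {z ∈ conjDiagram a | z.2 = j} = range (a.getD j 0) ×ˢ {j} by
    ext ⟨x, y⟩
    simp only [mem_filter, mem_conjDiagram, mem_product, mem_singleton, mem_range,
      lt_numPartsGt_iff ha]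
    grind]
  simp

end ConjugateRows

section MList

variable {a b : List ℕ}

lemma mList_conjList_self (ha : a.Pairwise (· ≥ ·)) : mList (conjList a) a = 1 := by
  have hrows (Z : Finset (ℕ × ℕ)) :
      (∀ i, #{z ∈ Z | z.1 = i} = (conjList a).getD i 0) ↔
        ∀ i, #{z ∈ Z | z.1 = i} = numPartsGt a i := by
    simp only [conjList_getD ha]
  rw [mList, Nat.card_eq_one_iff_exists]
  refine ⟨⟨conjDiagram a, (hrows _).2 card_filter_fst_conjDiagram,
    card_filter_snd_conjDiagram ha⟩, fun ⟨Z, hr, hc⟩ => ?_⟩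
  exact Subtype.ext (eq_conjDiagram ha ((hrows Z).1 hr) hc)

lemma sum_range_le_of_mList_ne_zero (ha : a.Pairwise (· ≥ ·)) (h : mList (conjList a) b ≠ 0)
    (k : ℕ) : ∑ j ∈ range k, b.getD j 0 ≤ ∑ j ∈ range k, a.getD j 0 := by
  obtain ⟨⟨Z, hr, hc⟩⟩ := (Nat.card_ne_zero.1 h).1
  exact sum_range_le_of_rows_eq_numPartsGt ha (fun i => (hr i).trans (conjList_getD ha i)) hc k

end MList

lemma exists_getD_lt_of_lex {a b : List ℕ} (hb : ∀ x ∈ b, 0 < x) (h : List.Lex (· < ·) a b) :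
    ∃ k, (∀ j < k, a.getD j 0 = b.getD j 0) ∧ a.getD k 0 < b.getD k 0 := by
  induction h with
  | nil => exact ⟨0, by simp, by simpa using hb _ List.mem_cons_self⟩
  | @cons x _ _ _ ih =>
    obtain ⟨k, hpre, hk⟩ := ih fun y hy => hb y (List.mem_cons_of_mem x hy)
    refine ⟨k + 1, fun j hj => ?_, by simpa using hk⟩
    cases j with
    | zero => rfl
    | succ j => simpa using hpre j (by omega)
  | rel hxy => exact ⟨0, by simp, by simpa using hxy⟩

lemma eq_or_lex_of_sum_range_le {a b : List ℕ} (hb : ∀ x ∈ b, 0 < x)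
    (h : ∀ k, ∑ j ∈ range k, b.getD j 0 ≤ ∑ j ∈ range k, a.getD j 0) :
    b = a ∨ List.Lex (· < ·) b a := by
  rcases lt_trichotomy b a with hba | hba | hab
  · exact Or.inr hba
  · exact Or.inl hba
  · obtain ⟨k, hpre, hk⟩ := exists_getD_lt_of_lex hb hab
    have hsum := h (k + 1)
    rw [sum_range_succ, sum_range_succ, sum_congr rfl fun j hj => hpre j (mem_range.1 hj)] at hsum
    omega

section SortedParts

variable {n : ℕ}

lemma sortedParts_pairwise_ge (p : n.Partition) : (sortedParts p).Pairwise (· ≥ ·) :=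
  List.pairwise_reverse.2 (Multiset.pairwise_sort p.parts (· ≤ ·))

lemma sortedParts_pos (p : n.Partition) {x : ℕ} (hx : x ∈ sortedParts p) : 0 < x :=
  p.parts_pos (by simpa [sortedParts] using hx)

lemma sortedParts_injective : Function.Injective (sortedParts (n := n)) := by
  intro p q h
  have hparts : p.parts = q.parts := by
    rw [← Multiset.sort_eq p.parts (· ≤ ·), ← Multiset.sort_eq q.parts (· ≤ ·),
      List.reverse_injective h]
  exact Nat.Partition.ext hparts

end SortedParts

theorem Matrix.det_eq_one_of_injective_of_lowerTriangular {α β R : Type*} [Fintype α]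
    [DecidableEq α] [LinearOrder β] [CommRing R] {M : Matrix α α R} {f : α → β}
    (hf : Function.Injective f) (hdiag : ∀ i, M i i = 1) (hlower : ∀ i j, f i < f j → M i j = 0) :
    M.det = 1 := by
  let : LinearOrder α := LinearOrder.lift' f hf
  rw [det_of_isLowerTriangular M hlower]
  exact prod_eq_one fun i _ => hdiag i

/-- The matrix `(m_{λᵀ,μ})`, with `λ, μ` running over the partitions of `n` ordered by
reverse lexicographic order, is upper triangular with `1`'s on the diagonal: the
diagonal entries `m_{λᵀ,λ}` equal `1`, off-diagonal entries `m_{λᵀ,μ}` vanish unless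
`μ` precedes `λ` lexicographically; in particular the matrix is invertible over `ℤ`. -/
theorem stmt_9 (n : ℕ) [DecidableEq (Nat.Partition n)] :
    (∀ p : Nat.Partition n, mList (conjList (sortedParts p)) (sortedParts p) = 1) ∧
    (∀ p q : Nat.Partition n, mList (conjList (sortedParts p)) (sortedParts q) ≠ 0 →
      q = p ∨ List.Lex (· < ·) (sortedParts q) (sortedParts p)) ∧
    IsUnit (Matrix.det (Matrix.of fun p q : Nat.Partition n =>
      ((mList (conjList (sortedParts p)) (sortedParts q) : ℤ)))) := by
  have hdiag (p : n.Partition) : mList (conjList (sortedParts p)) (sortedParts p) = 1 :=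
    mList_conjList_self (sortedParts_pairwise_ge p)
  have htri (p q : n.Partition) (h : mList (conjList (sortedParts p)) (sortedParts q) ≠ 0) :
      q = p ∨ List.Lex (· < ·) (sortedParts q) (sortedParts p) :=
    (eq_or_lex_of_sum_range_le (fun _ => sortedParts_pos q)
      (sum_range_le_of_mList_ne_zero (sortedParts_pairwise_ge p) h)).imp_left
      (sortedParts_injective ·)
  refine ⟨hdiag, htri, ?_⟩
  rw [Matrix.det_eq_one_of_injective_of_lowerTriangular sortedParts_injective
    (fun p => by simp [hdiag p]) fun p q hpq => ?_]
  · exact isUnit_one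
  by_contra hne
  rcases htri p q (by simpa using hne) with rfl | hqp
  · exact lt_irrefl _ hpq
  · exact lt_asymm hpq hqp
end
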